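/- For a prime p and m ∈ N, the number of pairs consisting of a composition of m together with a choice of automorphism of the associated product group (Z/p^{t_1}Z) × ... × (Z/p^{t_r}Z) acting factorwise is (p-1)·(2p-1)^(m-1). -/

import Mathlib

/-!
The automorphisms of `ZMod (p ^ t)` are its units, so a composition `(t₁, …, t_r)` of `m`
carries `∏ φ(p ^ tᵢ) = p ^ (m - r) (p - 1) ^ r` factorwise automorphisms. Compositions of `m`
with `r` blocks correspond to the `(r - 1)`-subsets of the `m - 1` interior cut points, so the
binomial theorem sums these weights to `(p - 1) ((p - 1) + p) ^ (m - 1)`.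
-/

open Finset

theorem ZMod.card_addAut (n : ℕ) [NeZero n] : Nat.card (AddAut (ZMod n)) = n.totient := by
  rw [Nat.card_congr (ZMod.AddAutEquivUnits n).toEquiv, Nat.card_congr Additive.toMul,
    Nat.card_eq_fintype_card, ZMod.card_units_eq_totient]

theorem Composition.prod_pow_blocksFun_sub_one_mul {M : Type*} [CommMonoid M] {n : ℕ}
    (c : Composition n) (a b : M) :
    ∏ i, a ^ (c.blocksFun i - 1) * b = a ^ (n - c.length) * b ^ c.length := by
  have hsum : ∑ i, (c.blocksFun i - 1) = n - c.length := by
    rw [sum_tsub_distrib _ fun i _ => c.one_le_blocksFun i, c.sum_blocksFun]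
    simp
  rw [prod_mul_distrib, prod_pow_eq_pow_sum, hsum, prod_const, card_univ, Fintype.card_fin]

theorem length_compositionAsSetEquiv_symm {n : ℕ} (hn : 0 < n) (s : Finset (Fin (n - 1))) :
    ((compositionAsSetEquiv n).symm s).length = #s + 1 := by
  set shift : Fin (n - 1) ↪ Fin (n + 1) := (Fin.castLEEmb (by omega)).trans (Fin.succEmb n)
  have hshift (j : Fin (n - 1)) : (shift j : ℕ) = j + 1 := rfl
  have hlast : Fin.last n ∉ s.map shift := by
    simp only [mem_map, not_exists, not_and, Fin.ext_iff, hshift, Fin.val_last]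
    omega
  have hzero : 0 ∉ cons (Fin.last n) (s.map shift) hlast := by
    simp only [mem_cons, mem_map, not_or, not_exists, not_and, Fin.ext_iff, hshift, Fin.val_last,
      Fin.val_zero]
    exact ⟨by omega, fun _ _ => by omega⟩
  have hboundaries : ((compositionAsSetEquiv n).symm s).boundaries =
      cons 0 (cons (Fin.last n) (s.map shift) hlast) hzero := by
    ext i
    simp only [compositionAsSetEquiv, Equiv.coe_fn_symm_mk, Set.toFinset_ofPred, mem_filter,
      mem_univ, true_and, mem_cons, mem_map, exists_prop]
    refine or_congr Iff.rfl (or_congr Iff.rfl (exists_congr fun j => and_congr_right fun _ => ?_))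
    rw [Fin.ext_iff, hshift, eq_comm]
  rw [CompositionAsSet.length, hboundaries, card_cons, card_cons, card_map]
  rfl

theorem Composition.sum_pow_sub_length_mul_pow_length {R : Type*} [CommSemiring R] {n : ℕ}
    (hn : 0 < n) (a b : R) :
    ∑ c : Composition n, a ^ (n - c.length) * b ^ c.length = b * (b + a) ^ (n - 1) := by
  rw [← Equiv.sum_comp ((compositionEquiv n).trans (compositionAsSetEquiv n)).symm,
    ← Fin.sum_pow_mul_eq_add_pow, mul_sum]
  refine sum_congr rfl fun s _ => ?_
  have hlen : ((compositionEquiv n).symm ((compositionAsSetEquiv n).symm s)).length = #s + 1 :=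
    (CompositionAsSet.toComposition_length _).trans (length_compositionAsSetEquiv_symm hn s)
  rw [Equiv.symm_trans_apply, hlen, pow_succ', show n - (#s + 1) = n - 1 - #s by omega]
  ring

theorem card_composition_automorphism_pairs (p m : ℕ) (hp : p.Prime) (hm : 0 < m) :
    Nat.card (Σ c : Composition m, ∀ i : Fin c.length, AddAut (ZMod (p ^ c.blocksFun i))) =
      (p - 1) * (2 * p - 1) ^ (m - 1) := by
  have (k : ℕ) : NeZero (p ^ k) := ⟨pow_ne_zero k hp.ne_zero⟩
  calc Nat.card (Σ c : Composition m, ∀ i : Fin c.length, AddAut (ZMod (p ^ c.blocksFun i)))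
      = ∑ c : Composition m, ∏ i, (p ^ c.blocksFun i).totient := by
        simp only [Nat.card_sigma, Nat.card_pi, ZMod.card_addAut]
    _ = ∑ c : Composition m, p ^ (m - c.length) * (p - 1) ^ c.length := by
        refine sum_congr rfl fun c _ => ?_
        simp only [Nat.totient_prime_pow hp (c.one_le_blocksFun _),
          c.prod_pow_blocksFun_sub_one_mul]
    _ = (p - 1) * (2 * p - 1) ^ (m - 1) := by
        rw [Composition.sum_pow_sub_length_mul_pow_length hm,
          show p - 1 + p = 2 * p - 1 by have := hp.one_le; omega]
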